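/- Set J₀ := {0} × J, an ideal of A⋈^f J. The map sending a prime ideal Q of B to Q̄^f := {(a, f(a)+j) : a ∈ A, j ∈ J, f(a)+j ∈ Q} establishes a bijection between the set of minimal prime ideals of B not containing J and the set of minimal prime ideals of A⋈^f J not containing J₀. -/

import Mathlib

section Amalgamation

variable {A B : Type*} [CommRing A] [CommRing B]

/-- The amalgamation `A ⋈^f J` of `A` with `B` along the ideal `J` of `B` with respect to
the ring homomorphism `f : A → B`, realized as the subring
`{(a, f a + j) | a ∈ A, j ∈ J}` of `A × B`. -/
def amalg (f : A →+* B) (J : Ideal B) : Subring (A × B) where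
  carrier := {x : A × B | x.2 - f x.1 ∈ J}
  zero_mem' := by simp
  one_mem' := by simp
  add_mem' := by
    intro x y hx hy
    simp only [Set.mem_setOf_eq, Prod.fst_add, Prod.snd_add, map_add] at *
    have h : x.2 + y.2 - (f x.1 + f y.1) = x.2 - f x.1 + (y.2 - f y.1) := by ring
    rw [h]; exact J.add_mem hx hy
  neg_mem' := by
    intro x hx
    simp only [Set.mem_setOf_eq, Prod.fst_neg, Prod.snd_neg, map_neg] at *
    have h : -x.2 - -f x.1 = -(x.2 - f x.1) := by ring
    rw [h]; exact J.neg_mem hx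
  mul_mem' := by
    intro x y hx hy
    simp only [Set.mem_setOf_eq, Prod.fst_mul, Prod.snd_mul, map_mul] at *
    have h : x.2 * y.2 - f x.1 * f y.1 = x.2 * (y.2 - f y.1) + (x.2 - f x.1) * f y.1 := by ring
    rw [h]
    exact J.add_mem (J.mul_mem_left _ hy) (J.mul_mem_right _ hx)

lemma mem_amalg_iff (f : A →+* B) (J : Ideal B) (x : A × B) :
    x ∈ amalg f J ↔ x.2 - f x.1 ∈ J := Iff.rfl

/-- The natural projection `p_A : A ⋈^f J → A`. -/
def pA (f : A →+* B) (J : Ideal B) : amalg f J →+* A :=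
  (RingHom.fst A B).comp (amalg f J).subtype

/-- The natural projection `p_B : A ⋈^f J → B`. -/
def pB (f : A →+* B) (J : Ideal B) : amalg f J →+* B :=
  (RingHom.snd A B).comp (amalg f J).subtype

/-- For an ideal `Q` of `B`, the ideal `Q̄^f = {(a, f a + j) | a ∈ A, j ∈ J, f a + j ∈ Q}`
of `A ⋈^f J`. -/
def idealQf (f : A →+* B) (J : Ideal B) (Q : Ideal B) : Ideal (amalg f J) :=
  Submodule.copy (Ideal.comap (pB f J) Q)
    {x : amalg f J | ∃ a : A, ∃ j ∈ J, (x : A × B) = (a, f a + j) ∧ f a + j ∈ Q}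
    (by
      ext x
      simp only [Set.mem_setOf_eq, SetLike.mem_coe, Ideal.mem_comap]
      constructor
      · rintro ⟨a, j, hj, hx, hQ⟩
        have h1 : pB f J x = f a + j := by
          show (x : A × B).2 = f a + j
          rw [hx]
        rw [h1]; exact hQ
      · intro hx
        refine ⟨(x : A × B).1, (x : A × B).2 - f (x : A × B).1,
          (mem_amalg_iff f J _).mp x.2, by ext <;> simp, ?_⟩
        simpa using (show (x : A × B).2 ∈ Q from hx))

/-- The ideal `J₀ = {0} × J` of `A ⋈^f J`. -/
def J0 (f : A →+* B) (J : Ideal B) : Ideal (amalg f J) :=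
  Submodule.copy (RingHom.ker (pA f J))
    {x : amalg f J | (x : A × B).1 = 0 ∧ (x : A × B).2 ∈ J}
    (by
      ext x
      simp only [Set.mem_setOf_eq, SetLike.mem_coe, RingHom.mem_ker]
      constructor
      · rintro ⟨h0, _⟩; exact h0
      · intro h0
        have h0' : (x : A × B).1 = 0 := h0
        refine ⟨h0', ?_⟩
        have h2 := (mem_amalg_iff f J _).mp x.2
        rw [h0', map_zero, sub_zero] at h2
        exact h2)

end Amalgamation

/- `p_B` maps `J₀` bijectively onto the ideal `J`. For any ring map `φ : R → S` and ideal `I` of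
`R` with this property, `Q ↦ φ⁻¹(Q)` is an order isomorphism from the primes of `S` not containing
`J` onto the primes of `R` not containing `I`: for `x ∈ I` both are the primes of
`R[1/x] ≅ S[1/φ x]`. Concretely, a prime `H ∌ x` is `φ⁻¹(Q)` for `Q = {s | y ∈ H}`, where `y ∈ I`
is the unique element with `φ y = s · φ x`. Both sets of primes are closed under going down, so
their minimal elements are minimal primes of the whole ring, and the order isomorphism matches
them. -/

theorem minimal_and_iff_of_antitone {α : Type*} [Preorder α] {P Q : α → Prop} {x : α}
    (hQ : Antitone Q) : Minimal (fun y ↦ P y ∧ Q y) x ↔ Minimal P x ∧ Q x :=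
  ⟨fun h ↦ ⟨⟨h.prop.1, fun _ hy hyx ↦ h.le_of_le ⟨hy, hQ hyx h.prop.2⟩ hyx⟩, h.prop.2⟩,
    fun h ↦ h.1.and_right h.2⟩

theorem Set.BijOn.setOf_minimal {α β : Type*} [Preorder α] [Preorder β] {s : Set α} {t : Set β}
    {g : α → β} (h : Set.BijOn g s t) (hg : ∀ ⦃x y⦄, x ∈ s → y ∈ s → (g x ≤ g y ↔ x ≤ y)) :
    Set.BijOn g {x | Minimal (· ∈ s) x} {y | Minimal (· ∈ t) y} := by
  rw [← h.image_eq, ← image_monotone_setOfPred_minimal_mem hg]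
  exact (h.injOn.mono fun _ hx ↦ hx.prop).bijOn_image

namespace Ideal

variable {R S : Type*} [CommRing R] [CommRing S]

theorem mem_minimalPrimes_and_not_le_iff {I q : Ideal R} :
    q ∈ minimalPrimes R ∧ ¬ I ≤ q ↔ Minimal (· ∈ {q : Ideal R | q.IsPrime ∧ ¬ I ≤ q}) q := by
  have hI : Antitone fun q : Ideal R ↦ ¬ I ≤ q := fun _ _ hle hb ha ↦ hb (le_trans ha hle)
  change IsMinimalPrime q ∧ _ ↔ _
  rw [IsMinimalPrime.iff_minimal]
  exact (minimal_and_iff_of_antitone hI).symm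

variable {φ : R →+* S} {I : Ideal R} {J : Ideal S}

theorem le_comap_iff_of_image_eq (hIJ : φ '' I = J) {Q : Ideal S} :
    I ≤ Q.comap φ ↔ J ≤ Q := by
  change (I : Set R) ⊆ φ ⁻¹' Q ↔ (J : Set S) ⊆ Q
  rw [← Set.image_subset_iff, hIJ]

theorem le_of_comap_le_comap (hJ : (J : Set S) ⊆ Set.range φ) {Q₁ Q₂ : Ideal S} [Q₂.IsPrime]
    (hJQ₂ : ¬ J ≤ Q₂) (h : Q₁.comap φ ≤ Q₂.comap φ) : Q₁ ≤ Q₂ := by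
  obtain ⟨j, hjJ, hjQ₂⟩ := SetLike.not_le_iff_exists.mp hJQ₂
  intro s hs
  obtain ⟨r, hr⟩ := hJ (J.mul_mem_left s hjJ)
  have hr₁ : r ∈ Q₁.comap φ := by simpa [mem_comap, hr] using Q₁.mul_mem_right j hs
  have hsj : s * j ∈ Q₂ := hr ▸ h hr₁
  exact (IsPrime.mem_or_mem ‹_› hsj).resolve_right hjQ₂

theorem exists_isPrime_comap_eq (hIJ : φ '' I = J) (hinj : Set.InjOn φ I) {H : Ideal R}
    [hH : H.IsPrime] (hIH : ¬ I ≤ H) : ∃ Q : Ideal S, Q.IsPrime ∧ Q.comap φ = H := by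
  obtain ⟨x, hxI, hxH⟩ := SetLike.not_le_iff_exists.mp hIH
  have hxJ : φ x ∈ (J : Set S) := hIJ ▸ ⟨x, hxI, rfl⟩
  have hdiv (s : S) : ∃ y ∈ I, φ y = s * φ x := by
    have hs : s * φ x ∈ (J : Set S) := J.mul_mem_left s hxJ
    rwa [← hIJ] at hs
  choose e heI he using hdiv
  have e_eq {s : S} {y : R} (hy : y ∈ I) (h : φ y = s * φ x) : e s = y :=
    hinj (heI s) hy ((he s).trans h.symm)
  have e_mul (s t : S) : e (s * t) * x = e s * e t :=
    (e_eq (I.mul_mem_right x (heI _)) (by rw [map_mul, he])).symm.trans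
      (e_eq (I.mul_mem_right _ (heI s)) (by rw [map_mul, he, he]; ring))
  have e_map (r : R) : e (φ r) = x * r := e_eq (I.mul_mem_right r hxI) (by rw [map_mul, mul_comm])
  have mem_of_mul_mem {s t : S} (h : e (s * t) ∈ H) : e s ∈ H ∨ e t ∈ H := by
    rw [← hH.mul_mem_iff_mem_or_mem, ← e_mul]
    exact H.mul_mem_right x h
  let Q : Ideal S :=
    { carrier := {s | e s ∈ H}
      zero_mem' := by simp [e_eq I.zero_mem (s := 0) (by simp)]
      add_mem' := fun {s t} hs ht ↦ by
        simpa [e_eq (s := s + t) (I.add_mem (heI s) (heI t)) (by rw [map_add, he, he, add_mul])]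
          using H.add_mem hs ht
      smul_mem' := fun c s hs ↦
        (hH.mem_or_mem (e_mul c s ▸ H.mul_mem_left (e c) hs)).resolve_right hxH }
  have hQ : Q.comap φ = H := by
    ext r
    change e (φ r) ∈ H ↔ r ∈ H
    rw [e_map, hH.mul_mem_iff_mem_or_mem, or_iff_right hxH]
  refine ⟨Q, ⟨fun htop ↦ hH.ne_top ?_, mem_of_mul_mem⟩, hQ⟩
  rw [← hQ, htop, comap_top]

theorem bijOn_comap_of_image_eq (hIJ : φ '' I = J) (hinj : Set.InjOn φ I) :
    Set.BijOn (comap φ) {Q : Ideal S | Q.IsPrime ∧ ¬ J ≤ Q} {H : Ideal R | H.IsPrime ∧ ¬ I ≤ H} := by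
  have hJ : (J : Set S) ⊆ Set.range φ := hIJ ▸ Set.image_subset_range _ _
  refine ⟨fun Q ⟨_, hJQ⟩ ↦ ⟨IsPrime.comap φ, (le_comap_iff_of_image_eq hIJ).not.mpr hJQ⟩,
    fun Q₁ ⟨_, hJQ₁⟩ Q₂ ⟨_, hJQ₂⟩ h ↦
      le_antisymm (le_of_comap_le_comap hJ hJQ₂ h.le) (le_of_comap_le_comap hJ hJQ₁ h.ge),
    fun H ⟨_, hIH⟩ ↦ ?_⟩
  obtain ⟨Q, hQ, rfl⟩ := exists_isPrime_comap_eq hIJ hinj hIH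
  exact ⟨Q, ⟨hQ, (le_comap_iff_of_image_eq hIJ).not.mp hIH⟩, rfl⟩

theorem bijOn_comap_minimalPrimes_of_image_eq (hIJ : φ '' I = J) (hinj : Set.InjOn φ I) :
    Set.BijOn (comap φ) {Q : Ideal S | Q ∈ minimalPrimes S ∧ ¬ J ≤ Q}
      {H : Ideal R | H ∈ minimalPrimes R ∧ ¬ I ≤ H} := by
  have hJ : (J : Set S) ⊆ Set.range φ := hIJ ▸ Set.image_subset_range _ _
  simp only [mem_minimalPrimes_and_not_le_iff]
  exact (bijOn_comap_of_image_eq hIJ hinj).setOf_minimal fun _ _ _ ⟨_, hJQ₂⟩ ↦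
    ⟨le_of_comap_le_comap hJ hJQ₂, fun h ↦ comap_mono h⟩

end Ideal

section Amalgamation

variable {A B : Type*} [CommRing A] [CommRing B] (f : A →+* B) (J : Ideal B)

theorem idealQf_eq_comap (Q : Ideal B) : idealQf f J Q = Q.comap (pB f J) :=
  Submodule.copy_eq _ _ _

theorem image_pB_J0 : pB f J '' J0 f J = J := by
  ext b
  constructor
  · rintro ⟨x, ⟨-, hx⟩, rfl⟩
    exact hx
  · intro hb
    exact ⟨⟨(0, b), by simpa [mem_amalg_iff] using hb⟩, ⟨rfl, hb⟩, rfl⟩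

theorem injOn_pB_J0 : Set.InjOn (pB f J) (J0 f J) :=
  fun _ ⟨hx, _⟩ _ ⟨hy, _⟩ h ↦ Subtype.ext (Prod.ext (hx.trans hy.symm) h)

end Amalgamation

/-- The map `Q ↦ Q̄^f` is a bijection between the minimal primes of `B` not containing `J`
and the minimal primes of `A ⋈^f J` not containing `J₀ = {0} × J`. -/
theorem stmt9 {A B : Type*} [CommRing A] [CommRing B] (f : A →+* B) (J : Ideal B) :
    Set.BijOn (fun Q : Ideal B => idealQf f J Q)
      {Q : Ideal B | Q ∈ minimalPrimes B ∧ ¬ J ≤ Q}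
      {H : Ideal (amalg f J) | H ∈ minimalPrimes (amalg f J) ∧ ¬ J0 f J ≤ H} := by
  simpa only [idealQf_eq_comap] using
    Ideal.bijOn_comap_minimalPrimes_of_image_eq (image_pB_J0 f J) (injOn_pB_J0 f J)
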